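/- Let Φ(a) = (1/√(2π)) ∫_{-∞}^{a} exp(-s²/2) ds be the standard Gaussian CDF and Φ⁻¹ its inverse. For any measurable function f : ℝⁿ → [0,1] with Weierstrass transform f̂ taking values in (0,1), the map x ↦ Φ⁻¹(f̂(x)) is 1-Lipschitz with respect to the Euclidean norm: for all x, y ∈ ℝⁿ, |Φ⁻¹(f̂(x)) - Φ⁻¹(f̂(y))| ≤ ‖x - y‖₂. -/

import Mathlib

open MeasureTheory Real

/-- The standard `n`-dimensional Gaussian measure `N(0, Iₙ)`, with density
`(2π)^{-n/2} exp(-‖t‖²/2)` with respect to Lebesgue measure. -/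
noncomputable def stdGaussian (n : ℕ) : Measure (EuclideanSpace ℝ (Fin n)) :=
  volume.withDensity fun t =>
    ENNReal.ofReal ((2 * π) ^ (-(n : ℝ) / 2) * Real.exp (-‖t‖ ^ 2 / 2))

/-- The standard Gaussian CDF `Φ(a) = (1/√(2π)) ∫_{-∞}^a exp(-s²/2) ds`. -/
noncomputable def stdGaussianCDF (a : ℝ) : ℝ :=
  (Real.sqrt (2 * π))⁻¹ * ∫ s in Set.Iic a, Real.exp (-s ^ 2 / 2)

/-- The inverse `Φ⁻¹ : (0,1) → ℝ` of the standard Gaussian CDF. -/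
noncomputable def stdGaussianCDFInv : ℝ → ℝ :=
  Function.invFun stdGaussianCDF

/-!
Fix `x` and a direction `v ≠ 0`, and let `g = f (x + ·)`. By the Cameron–Martin formula,
`f̂ (x + v)` is the Gaussian integral of `g` reweighted by the likelihood ratio
`w t = exp (⟪v, t⟫ - ‖v‖² / 2)`, an increasing function of `⟪v, t⟫`. By the Neyman–Pearson
lemma, among `[0, 1]`-valued functions with the same Gaussian mass as `g`, the indicator of a
half-space `{⟪v, t⟫ ≤ const}` minimises this weighted integral. For half-spaces both integrals
are values of `Φ`, since `⟪e, ·⟫` is standard normal for a unit vector `e`. The result is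
`Φ (Φ⁻¹ (f̂ x) - ‖v‖) ≤ f̂ (x + v)`, which, applied in both directions, is the claim.
-/

open Set
open ProbabilityTheory hiding stdGaussian

namespace ProbabilityTheory

variable {μ : Measure ℝ} [IsProbabilityMeasure μ]

theorem continuous_cdf [NullSingletonClass μ] : Continuous (cdf μ) := by
  refine continuous_iff_continuousAt.2 fun a ↦
    ((cdf μ).mono.continuousAt_iff_leftLim_eq_rightLim).2 ?_
  have hjump : ENNReal.ofReal (cdf μ a - Function.leftLim (cdf μ) a) = 0 := by
    rw [← StieltjesFunction.measure_singleton, measure_cdf, measure_singleton]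
  rw [StieltjesFunction.rightLim_eq]
  linarith [ENNReal.ofReal_eq_zero.1 hjump, (cdf μ).mono.leftLim_le (le_refl a)]

theorem strictMono_cdf (h : volume ≪ μ) : StrictMono (cdf μ) := by
  refine fun a b hab ↦ lt_of_not_ge fun hba ↦ ?_
  have hμ : μ (Ioc a b) = 0 := by
    rw [← measure_cdf (μ := μ), StieltjesFunction.measure_Ioc, ENNReal.ofReal_eq_zero]
    linarith
  have hvol := h hμ
  rw [Real.volume_Ioc, ENNReal.ofReal_eq_zero] at hvol
  linarith

theorem exists_cdf_eq [NullSingletonClass μ] {p : ℝ} (hp : p ∈ Ioo 0 1) : ∃ x, cdf μ x = p := by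
  obtain ⟨a, ha⟩ := ((tendsto_cdf_atBot (μ := μ)).eventually (eventually_lt_nhds hp.1)).exists
  obtain ⟨b, hb⟩ := ((tendsto_cdf_atTop (μ := μ)).eventually (eventually_gt_nhds hp.2)).exists
  exact mem_range_of_exists_le_of_exists_ge continuous_cdf ⟨a, ha.le⟩ ⟨b, hb.le⟩

end ProbabilityTheory

theorem stdGaussianCDF_eq_cdf : stdGaussianCDF = cdf (gaussianReal 0 1) := by
  ext a
  rw [cdf_eq_real, measureReal_def, gaussianReal_apply_eq_integral _ one_ne_zero,
    ENNReal.toReal_ofReal (integral_nonneg fun _ ↦ gaussianPDFReal_nonneg _ _ _),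
    stdGaussianCDF, ← integral_const_mul]
  simp [gaussianPDFReal]

theorem stdGaussianCDF_strictMono : StrictMono stdGaussianCDF :=
  stdGaussianCDF_eq_cdf ▸ strictMono_cdf (gaussianReal_absolutelyContinuous' 0 one_ne_zero)

theorem stdGaussianCDF_stdGaussianCDFInv {p : ℝ} (hp : p ∈ Ioo 0 1) :
    stdGaussianCDF (stdGaussianCDFInv p) = p :=
  have := nullSingletonClass_gaussianReal (μ := 0) one_ne_zero
  Function.invFun_eq (stdGaussianCDF_eq_cdf ▸ exists_cdf_eq hp)

/-- The Neyman–Pearson lemma. -/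
theorem integral_mul_indicator_le_integral_mul {X : Type*} [MeasurableSpace X] {μ : Measure X}
    [IsFiniteMeasure μ] {w g : X → ℝ} {S : Set X} {c : ℝ} (hS : MeasurableSet S)
    (hw : Integrable w μ) (hg : AEStronglyMeasurable g μ) (hg01 : ∀ x, g x ∈ Icc 0 1)
    (hwS : ∀ x ∈ S, w x ≤ c) (hwSc : ∀ x ∉ S, c ≤ w x) (hmass : ∫ x, g x ∂μ = μ.real S) :
    ∫ x, w x * S.indicator 1 x ∂μ ≤ ∫ x, w x * g x ∂μ := by
  have hpos : 0 ≤ ∫ x, (w x - c) * (g x - S.indicator 1 x) ∂μ := integral_nonneg fun x ↦ by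
    by_cases hx : x ∈ S
    · rw [indicator_of_mem hx, Pi.one_apply]
      exact mul_nonneg_of_nonpos_of_nonpos (by linarith [hwS x hx]) (by linarith [(hg01 x).2])
    · rw [indicator_of_notMem hx]
      exact mul_nonneg (by linarith [hwSc x hx]) (by linarith [(hg01 x).1])
  have hgb : ∀ᵐ x ∂μ, ‖g x‖ ≤ 1 := .of_forall fun x ↦
    abs_le.2 ⟨by linarith [(hg01 x).1], (hg01 x).2⟩
  have hχ : Integrable (S.indicator (1 : X → ℝ)) μ := (integrable_const 1).indicator hS
  have hgI : Integrable g μ := .of_bound hg 1 hgb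
  have hwg : Integrable (fun x ↦ w x * g x) μ := hw.mul_bdd hg hgb
  have hwχ : Integrable (fun x ↦ w x * S.indicator 1 x) μ :=
    hw.mul_bdd hχ.aestronglyMeasurable (c := 1) (.of_forall fun x ↦ by
      by_cases hx : x ∈ S <;> simp [hx])
  have hexpand : ∫ x, (w x - c) * (g x - S.indicator 1 x) ∂μ =
      (∫ x, w x * g x ∂μ - ∫ x, w x * S.indicator 1 x ∂μ) - c * (∫ x, g x ∂μ - μ.real S) := by
    have hring : ∀ x, (w x - c) * (g x - S.indicator 1 x) =
        (w x * g x - w x * S.indicator 1 x) - c * (g x - S.indicator 1 x) := fun x ↦ by ring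
    simp only [hring]
    rw [integral_sub (f := fun x ↦ w x * g x - w x * S.indicator 1 x)
      (g := fun x ↦ c * (g x - S.indicator 1 x)) (hwg.sub hwχ) ((hgI.sub hχ).const_mul c),
      integral_sub hwg hwχ, integral_const_mul, integral_sub hgI hχ, integral_indicator_one hS]
  rw [hmass, sub_self, mul_zero, sub_zero] at hexpand
  linarith

section Density

variable {n : ℕ}

noncomputable def stdGaussianPDF (n : ℕ) (t : EuclideanSpace ℝ (Fin n)) : ℝ :=
  (2 * π) ^ (-(n : ℝ) / 2) * rexp (-‖t‖ ^ 2 / 2)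

theorem stdGaussianPDF_sub (t v : EuclideanSpace ℝ (Fin n)) :
    stdGaussianPDF n (t - v) = rexp (inner ℝ v t - ‖v‖ ^ 2 / 2) * stdGaussianPDF n t := by
  rw [stdGaussianPDF, stdGaussianPDF, mul_left_comm, ← Real.exp_add, norm_sub_sq_real,
    real_inner_comm]
  ring_nf

theorem integral_stdGaussian {F : Type*} [NormedAddCommGroup F] [NormedSpace ℝ F]
    (h : EuclideanSpace ℝ (Fin n) → F) :
    ∫ t, h t ∂stdGaussian n = ∫ t, stdGaussianPDF n t • h t := by
  rw [stdGaussian, integral_withDensity_eq_integral_toReal_smul (by fun_prop) (by simp)]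
  congr with t
  rw [ENNReal.toReal_ofReal (by positivity), stdGaussianPDF]

theorem charFun_stdGaussian' (u : EuclideanSpace ℝ (Fin n)) :
    charFun (stdGaussian n) u = Complex.exp (-‖u‖ ^ 2 / 2) := by
  have hintegrand : ∀ t : EuclideanSpace ℝ (Fin n),
      stdGaussianPDF n t • Complex.exp (inner ℝ t u * Complex.I) =
        ((2 * π) ^ (-(n : ℝ) / 2) : ℝ) *
          Complex.exp (-(1 / 2 : ℂ) * ‖t‖ ^ 2 + Complex.I * inner ℝ u t) := fun t ↦ by
    rw [stdGaussianPDF, Complex.real_smul, Complex.ofReal_mul, Complex.ofReal_exp, mul_assoc,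
      ← Complex.exp_add, real_inner_comm]
    congr 2
    push_cast
    ring
  have h2π : (2 * π : ℂ) ≠ 0 := by exact_mod_cast (by positivity : (2 * π : ℝ) ≠ 0)
  rw [charFun_apply, integral_stdGaussian]
  simp only [hintegrand]
  rw [integral_const_mul, GaussianFourier.integral_cexp_neg_mul_sq_norm_add (by norm_num),
    finrank_euclideanSpace, Fintype.card_fin, Complex.ofReal_cpow (by positivity),
    Complex.ofReal_mul, Complex.ofReal_ofNat,
    show ((-(n : ℝ) / 2 : ℝ) : ℂ) = -((n : ℂ) / 2) by push_cast; ring,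
    show (π : ℂ) / (1 / 2) = 2 * π by ring, Complex.cpow_neg, ← mul_assoc,
    inv_mul_cancel₀ (Complex.cpow_ne_zero_iff.2 (.inl h2π)), one_mul, Complex.I_sq]
  ring_nf

theorem stdGaussian_eq_stdGaussian :
    stdGaussian n = ProbabilityTheory.stdGaussian (EuclideanSpace ℝ (Fin n)) := by
  -- `charFun μ 0 = μ.real univ` vanishes when `μ univ = ∞`, so its value `1` forces finiteness.
  have : IsFiniteMeasure (stdGaussian n) := by
    have hmass : (stdGaussian n).real univ = 1 := by
      simpa using charFun_stdGaussian' (0 : EuclideanSpace ℝ (Fin n))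
    refine ⟨lt_top_iff_ne_top.2 fun htop ↦ ?_⟩
    simp [measureReal_def, htop] at hmass
  exact Measure.ext_of_charFun (funext fun u ↦ by rw [charFun_stdGaussian', charFun_stdGaussian])

end Density

namespace ProbabilityTheory

section InnerProductSpace

variable {E : Type*} [NormedAddCommGroup E] [InnerProductSpace ℝ E] [FiniteDimensional ℝ E]
  [MeasurableSpace E] [BorelSpace E]

theorem map_innerSL_stdGaussian (v : E) :
    (stdGaussian E).map (innerSL ℝ v) = gaussianReal 0 (‖v‖₊ ^ 2) := by
  rw [IsGaussian.map_eq_gaussianReal, integral_strongDual_stdGaussian, variance_dual_stdGaussian,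
    innerSL_apply_norm]
  congr
  ext
  simp

theorem integrable_exp_inner_stdGaussian (v : E) :
    Integrable (fun t ↦ rexp (inner ℝ v t)) (stdGaussian E) := by
  have h := integrable_exp_mul_gaussianReal (μ := 0) (v := ‖v‖₊ ^ 2) 1
  rw [← map_innerSL_stdGaussian, integrable_map_measure (by fun_prop) (by fun_prop)] at h
  simpa [Function.comp_def] using h

theorem measureReal_inner_le_stdGaussian {e : E} (he : ‖e‖ = 1) (b : ℝ) :
    (stdGaussian E).real {t | inner ℝ e t ≤ b} = stdGaussianCDF b := by
  have he' : ‖e‖₊ ^ 2 = 1 := by ext; simp [he]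
  rw [stdGaussianCDF_eq_cdf, cdf_eq_real, ← he', ← map_innerSL_stdGaussian,
    map_measureReal_apply (by fun_prop) measurableSet_Iic]
  rfl

end InnerProductSpace

variable {n : ℕ}

/-- The Cameron–Martin formula. -/
theorem integral_comp_add_stdGaussian {F : Type*} [NormedAddCommGroup F] [NormedSpace ℝ F]
    (h : EuclideanSpace ℝ (Fin n) → F) (v : EuclideanSpace ℝ (Fin n)) :
    ∫ t, h (t + v) ∂stdGaussian (EuclideanSpace ℝ (Fin n)) =
      ∫ t, rexp (inner ℝ v t - ‖v‖ ^ 2 / 2) • h t ∂stdGaussian (EuclideanSpace ℝ (Fin n)) := by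
  rw [← stdGaussian_eq_stdGaussian, integral_stdGaussian, integral_stdGaussian,
    ← integral_sub_right_eq_self _ v]
  congr 1 with t
  rw [sub_add_cancel, stdGaussianPDF_sub, mul_comm, mul_smul]

theorem stdGaussianCDF_sub_norm_le (g : EuclideanSpace ℝ (Fin n) → ℝ) (hg : Measurable g)
    (hg01 : ∀ t, g t ∈ Icc 0 1) (hp : ∫ t, g t ∂stdGaussian (EuclideanSpace ℝ (Fin n)) ∈ Ioo 0 1)
    (v : EuclideanSpace ℝ (Fin n)) :
    stdGaussianCDF (stdGaussianCDFInv (∫ t, g t ∂stdGaussian (EuclideanSpace ℝ (Fin n))) - ‖v‖) ≤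
      ∫ t, g (t + v) ∂stdGaussian (EuclideanSpace ℝ (Fin n)) := by
  set γ := stdGaussian (EuclideanSpace ℝ (Fin n))
  rcases eq_or_ne v 0 with rfl | hv
  · simp [stdGaussianCDF_stdGaussianCDFInv hp]
  set a := stdGaussianCDFInv (∫ t, g t ∂γ)
  have hvpos : 0 < ‖v‖ := norm_pos_iff.2 hv
  set e := ‖v‖⁻¹ • v
  have he : ‖e‖ = 1 := by simp [e, norm_smul, hvpos.ne']
  have hve : ∀ t, inner ℝ v t = ‖v‖ * inner ℝ e t := fun t ↦ by
    simp [e, real_inner_smul_left, hvpos.ne']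
  have hev : inner ℝ e v = ‖v‖ := by
    rw [real_inner_smul_left, real_inner_self_eq_norm_sq]
    field_simp
  set S := {t | inner ℝ e t ≤ a}
  have hS : MeasurableSet S := measurableSet_le (by fun_prop) measurable_const
  have hshift : ∀ t, S.indicator (1 : EuclideanSpace ℝ (Fin n) → ℝ) (t + v) =
      {t | inner ℝ e t ≤ a - ‖v‖}.indicator 1 t := fun t ↦ by
    simp [S, indicator_apply, inner_add_right, hev, le_sub_iff_add_le]
  have hw : Integrable (fun t ↦ rexp (inner ℝ v t - ‖v‖ ^ 2 / 2)) γ := by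
    simpa only [Real.exp_sub] using (integrable_exp_inner_stdGaussian v).div_const _
  have hmass : ∫ t, g t ∂γ = γ.real S := by
    rw [measureReal_inner_le_stdGaussian he, stdGaussianCDF_stdGaussianCDFInv hp]
  calc stdGaussianCDF (a - ‖v‖)
      = γ.real {t | inner ℝ e t ≤ a - ‖v‖} := (measureReal_inner_le_stdGaussian he _).symm
    _ = ∫ t, S.indicator 1 (t + v) ∂γ := by
        simp only [hshift]
        rw [integral_indicator_one (measurableSet_le (by fun_prop) measurable_const)]
    _ = ∫ t, rexp (inner ℝ v t - ‖v‖ ^ 2 / 2) * S.indicator 1 t ∂γ :=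
        integral_comp_add_stdGaussian _ v
    _ ≤ ∫ t, rexp (inner ℝ v t - ‖v‖ ^ 2 / 2) * g t ∂γ := by
        refine integral_mul_indicator_le_integral_mul (c := rexp (‖v‖ * a - ‖v‖ ^ 2 / 2)) hS hw
          hg.aestronglyMeasurable hg01 (fun t ht ↦ ?_) (fun t ht ↦ ?_) hmass
        · exact Real.exp_le_exp.2 (by rw [hve]; gcongr; exact ht)
        · exact Real.exp_le_exp.2 (by rw [hve]; gcongr; exact (not_le.1 ht).le)
    _ = ∫ t, g (t + v) ∂γ := (integral_comp_add_stdGaussian g v).symm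

end ProbabilityTheory

/-- for measurable `f : ℝⁿ → [0,1]` whose Weierstrass transform `f̂`
takes values in `(0,1)`, the map `x ↦ Φ⁻¹(f̂(x))` is 1-Lipschitz for the Euclidean
norm. -/
theorem probit_weierstrass_lipschitz (n : ℕ)
    (f : EuclideanSpace ℝ (Fin n) → ℝ) (hf : Measurable f)
    (hf01 : ∀ t, f t ∈ Set.Icc (0 : ℝ) 1)
    (fhat : EuclideanSpace ℝ (Fin n) → ℝ)
    (hfhat : ∀ x, fhat x = ∫ t, f (x + t) ∂(stdGaussian n))
    (hfhat01 : ∀ x, fhat x ∈ Set.Ioo (0 : ℝ) 1) :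
    ∀ x y : EuclideanSpace ℝ (Fin n),
      |stdGaussianCDFInv (fhat x) - stdGaussianCDFInv (fhat y)| ≤ ‖x - y‖ := by
  simp only [stdGaussian_eq_stdGaussian] at hfhat
  have hlower : ∀ x y, stdGaussianCDFInv (fhat x) - ‖y - x‖ ≤ stdGaussianCDFInv (fhat y) := by
    intro x y
    have key := stdGaussianCDF_sub_norm_le (fun t ↦ f (x + t)) (hf.comp (measurable_const_add x))
      (fun t ↦ hf01 _) (hfhat x ▸ hfhat01 x) (y - x)
    simp only [← hfhat x, show ∀ t, x + (t + (y - x)) = y + t from fun t ↦ by abel,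
      ← hfhat y] at key
    rw [← stdGaussianCDF_stdGaussianCDFInv (hfhat01 y)] at key
    exact stdGaussianCDF_strictMono.le_iff_le.1 key
  intro x y
  rw [abs_sub_le_iff]
  constructor <;> linarith [hlower x y, hlower y x, norm_sub_rev x y]
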